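/- Let p_t(x) = ∫ N(x; x₀, σ_t²I) p₀(x₀) dx₀ with σ_t → 0 as t → 0, and suppose (i) log p_t(x) → log p₀(x) pointwise on the ball B(0,d), (ii) ∇ log p_t and ∇² log p_t are bounded uniformly in t < τ on B(0,d). Let H ∈ ℝ^{m×n}, y ∈ ℝᵐ, σ_y > 0, D(x,t) = x + σ_t² ∇ log p_t(x), and define VML_t(x) as in the linear VML decomposition with constant C_VML = −n/2 + m log σ_y − ((n−m)/2) log 2π; i.e., VML_t(x) = −log p_t(x) − (σ_t²/2)‖∇ log p_t(x)‖² − (σ_t²/2)Tr(∇² log p_t(x)) + ‖y − H D(x,t)‖²/(2σ_y²) + (σ_t⁴/(2σ_y²))Tr(H ∇² log p_t(x) Hᵀ) + (σ_t²/(2σ_y²))Tr(H Hᵀ) + log p(y) − n log σ_t + C_VML. Then VML_t(x) + n log σ_t converges pointwise on B(0,d) to −log p₀(x|y) + Ĉ where Ĉ = −n/2 − (n/2) log 2π, with log p₀(x|y) = log p₀(x) + log N(y; Hx, σ_y²I) − log p(y). -/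

import Mathlib

/-!
Every correction term of `VML_t(x) + n log σ_t` is `σ_t²` or `σ_t⁴` times a quantity that the
uniform bounds on the score and the Hessian keep bounded in `t` (the squared score, the trace of
the Hessian and of its conjugate by `H`, or a constant), so it vanishes as `σ_t → 0`. Since
`D(x,t) = x + σ_t² ∇ log p_t(x) → x`, the data-fidelity term tends to `‖y - Hx‖² / (2σ_y²)`, which
together with the constant `C_VML` is `-log N(y; Hx, σ_y²I) + Ĉ`.
-/

open MeasureTheory Real Filter Matrix

noncomputable def gpdf (k : ℕ) (σ d2 : ℝ) : ℝ :=
  (2 * Real.pi * σ ^ 2) ^ (-(k : ℝ) / 2) * Real.exp (-d2 / (2 * σ ^ 2))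

/-- Density of the multivariate Gaussian `N(μ, σ²I)` on `ℝⁿ` evaluated at `x`. -/
noncomputable def gaussPdf (n : ℕ) (σ : ℝ) (μ x : EuclideanSpace ℝ (Fin n)) : ℝ :=
  gpdf n σ (‖x - μ‖ ^ 2)

open Topology

lemma log_gpdf {σ : ℝ} (hσ : σ ≠ 0) (k : ℕ) (d2 : ℝ) :
    Real.log (gpdf k σ d2)
      = -(k : ℝ) / 2 * (Real.log (2 * π) + 2 * Real.log σ) - d2 / (2 * σ ^ 2) := by
  have hbase : 0 < 2 * π * σ ^ 2 := by positivity
  rw [gpdf, Real.log_mul (Real.rpow_pos_of_pos hbase _).ne' (Real.exp_ne_zero _),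
    Real.log_rpow hbase, Real.log_exp, Real.log_mul (by positivity) (by positivity),
    Real.log_pow]
  push_cast
  ring

lemma Matrix.abs_trace_mul_le {ι κ : Type*} [Fintype ι] [Fintype κ]
    (A : Matrix ι κ ℝ) (M : Matrix κ ι ℝ) {K : ℝ} (hM : ∀ i j, |M i j| ≤ K) :
    |(A * M).trace| ≤ (∑ i, ∑ j, |A i j|) * K := by
  calc |(A * M).trace| = |∑ i, ∑ j, A i j * M j i| := by simp only [trace, diag, mul_apply]
    _ ≤ ∑ i, ∑ j, |A i j| * K := by
      refine (Finset.abs_sum_le_sum_abs _ _).trans (Finset.sum_le_sum fun i _ => ?_)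
      refine (Finset.abs_sum_le_sum_abs _ _).trans (Finset.sum_le_sum fun j _ => ?_)
      rw [abs_mul]
      exact mul_le_mul_of_nonneg_left (hM j i) (abs_nonneg _)
    _ = (∑ i, ∑ j, |A i j|) * K := by simp only [Finset.sum_mul]

lemma Filter.Tendsto.pow_div_mul_of_eventually_abs_le {α : Type*} {l : Filter α} {σ u : α → ℝ}
    (hσ : Tendsto σ l (𝓝 0)) {k : ℕ} (hk : k ≠ 0) (c : ℝ) {C : ℝ} (hu : ∀ᶠ t in l, |u t| ≤ C) :
    Tendsto (fun t => σ t ^ k / c * u t) l (𝓝 0) := by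
  have hσk : Tendsto (fun t => σ t ^ k / c) l (𝓝 0) := by
    simpa [zero_pow hk] using (hσ.pow k).div_const c
  exact hσk.zero_mul_isBoundedUnder_le (isBoundedUnder_of_eventually_le hu)

lemma Filter.Tendsto.add_pow_smul_of_eventually_norm_le {α E : Type*} [NormedAddCommGroup E]
    [NormedSpace ℝ E] {l : Filter α} {σ : α → ℝ} {v : α → E} (hσ : Tendsto σ l (𝓝 0))
    {k : ℕ} (hk : k ≠ 0) (x : E) {K : ℝ} (hv : ∀ᶠ t in l, ‖v t‖ ≤ K) :
    Tendsto (fun t => x + σ t ^ k • v t) l (𝓝 x) := by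
  have hσk : Tendsto (fun t => σ t ^ k) l (𝓝 0) := by simpa [zero_pow hk] using hσ.pow k
  simpa using tendsto_const_nhds.add <|
    hσk.zero_smul_isBoundedUnder_le (isBoundedUnder_of_eventually_le hv)

theorem vml_pointwise_limit_general (n m : ℕ) (τ d : ℝ)
    (p0 : EuclideanSpace ℝ (Fin n) → ℝ)
    (σ : ℝ → ℝ)
    (hσ0 : Tendsto σ (nhdsWithin 0 (Set.Ioo 0 τ)) (nhds 0))
    (p : ℝ → EuclideanSpace ℝ (Fin n) → ℝ)
    (g : ℝ → EuclideanSpace ℝ (Fin n) → EuclideanSpace ℝ (Fin n))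
    (Hess : ℝ → EuclideanSpace ℝ (Fin n) → Matrix (Fin n) (Fin n) ℝ)
    -- (i) pointwise convergence of `log p_t` to `log p₀` on the ball
    (hlim : ∀ x ∈ Metric.closedBall (0 : EuclideanSpace ℝ (Fin n)) d,
      Tendsto (fun t => Real.log (p t x)) (nhdsWithin 0 (Set.Ioo 0 τ))
        (nhds (Real.log (p0 x))))
    -- (ii) uniform (in `t < τ`) bounds on score and Hessian over the ball
    (hbdd : ∃ K, ∀ t ∈ Set.Ioo (0 : ℝ) τ,
      ∀ x ∈ Metric.closedBall (0 : EuclideanSpace ℝ (Fin n)) d,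
        ‖g t x‖ ≤ K ∧ ∀ i j, |Hess t x i j| ≤ K)
    (H : Matrix (Fin m) (Fin n) ℝ) (y : Fin m → ℝ) (σy : ℝ) (hσy : 0 < σy)
    (py : ℝ) :
    ∀ x ∈ Metric.closedBall (0 : EuclideanSpace ℝ (Fin n)) d,
      Tendsto
        (fun t =>
          (-Real.log (p t x) - σ t ^ 2 / 2 * ‖g t x‖ ^ 2
              - σ t ^ 2 / 2 * (Hess t x).trace
              + (∑ i, (y i - H.mulVec (fun k => (x + σ t ^ 2 • g t x) k) i) ^ 2)
                  / (2 * σy ^ 2)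
              + σ t ^ 4 / (2 * σy ^ 2) * (H * Hess t x * Hᵀ).trace
              + σ t ^ 2 / (2 * σy ^ 2) * (H * Hᵀ).trace
              + Real.log py - n * Real.log (σ t)
              + (-(n : ℝ) / 2 + m * Real.log σy
                  - ((n : ℝ) - m) / 2 * Real.log (2 * Real.pi)))
            + n * Real.log (σ t))
        (nhdsWithin 0 (Set.Ioo 0 τ))
        (nhds
          (-(Real.log (p0 x)
              + Real.log (gpdf m σy (∑ i, (y i - H.mulVec (fun k => x k) i) ^ 2))
              - Real.log py)
            + (-(n : ℝ) / 2 - (n : ℝ) / 2 * Real.log (2 * Real.pi)))) := by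
  intro x hx
  obtain ⟨K, hK⟩ := hbdd
  set l := nhdsWithin (0 : ℝ) (Set.Ioo 0 τ)
  have hscoreK : ∀ᶠ t in l, ‖g t x‖ ≤ K :=
    eventually_nhdsWithin_of_forall fun t ht => (hK t ht x hx).1
  have hHessK : ∀ᶠ t in l, ∀ i j, |Hess t x i j| ≤ K :=
    eventually_nhdsWithin_of_forall fun t ht => (hK t ht x hx).2
  have hscore : Tendsto (fun t => σ t ^ 2 / 2 * ‖g t x‖ ^ 2) l (𝓝 0) :=
    hσ0.pow_div_mul_of_eventually_abs_le two_ne_zero 2 <| hscoreK.mono fun t h => by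
      simpa only [abs_pow, abs_norm] using pow_le_pow_left₀ (norm_nonneg (g t x)) h 2
  have htrace : Tendsto (fun t => σ t ^ 2 / 2 * (Hess t x).trace) l (𝓝 0) :=
    hσ0.pow_div_mul_of_eventually_abs_le two_ne_zero 2 <| hHessK.mono fun t h => by
      simpa only [Matrix.one_mul] using Matrix.abs_trace_mul_le 1 (Hess t x) h
  have hconj : Tendsto (fun t => σ t ^ 4 / (2 * σy ^ 2) * (H * Hess t x * Hᵀ).trace) l (𝓝 0) :=
    hσ0.pow_div_mul_of_eventually_abs_le four_ne_zero _ <| hHessK.mono fun t h => by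
      simpa only [trace_mul_comm _ Hᵀ, ← Matrix.mul_assoc] using
        Matrix.abs_trace_mul_le (Hᵀ * H) (Hess t x) h
  have hnoise : Tendsto (fun t => σ t ^ 2 / (2 * σy ^ 2) * (H * Hᵀ).trace) l (𝓝 0) :=
    hσ0.pow_div_mul_of_eventually_abs_le two_ne_zero _
      (Eventually.of_forall fun _ => le_refl |(H * Hᵀ).trace|)
  have hfidelity := (((by fun_prop : Continuous fun z : EuclideanSpace ℝ (Fin n) =>
      ∑ i, (y i - H.mulVec (fun k => z k) i) ^ 2).tendsto x).comp
    (hσ0.add_pow_smul_of_eventually_norm_le two_ne_zero x hscoreK)).div_const (2 * σy ^ 2)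
  have hsum := (((((hlim x hx).neg.sub hscore).sub htrace).add hfidelity).add hconj).add hnoise
  convert hsum.add_const (Real.log py + (-(n : ℝ) / 2 + m * Real.log σy
      - ((n : ℝ) - m) / 2 * Real.log (2 * Real.pi))) using 1
  · funext t
    simp only [Function.comp_apply]
    ring
  · rw [log_gpdf hσy.ne']
    congr 1
    ring

/-- **Pointwise limit of the (shifted) VML.** With `p_t` the Gaussian smoothing of `p₀`,
`D(x,t) = x + σ_t² ∇ log p_t(x)`, uniformly bounded score and Hessian on `B(0,d)` and
pointwise convergence of `log p_t` to `log p₀` there, the function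
`VML_t(x) + n log σ_t` converges pointwise on `B(0,d)` to `− log p₀(x|y) + Ĉ` as `t → 0`,
where `Ĉ = −n/2 − (n/2) log 2π` and
`log p₀(x|y) = log p₀(x) + log N(y; Hx, σ_y²I) − log p(y)`. -/
theorem vml_pointwise_limit (n m : ℕ) (τ d : ℝ) (hτ : 0 < τ) (hd : 0 < d)
    (p0 : EuclideanSpace ℝ (Fin n) → ℝ)
    (hp0_nonneg : ∀ x, 0 ≤ p0 x) (hp0_prob : ∫ x, p0 x = 1)
    (σ : ℝ → ℝ) (hσpos : ∀ t ∈ Set.Ioo (0 : ℝ) τ, 0 < σ t)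
    (hσ0 : Tendsto σ (nhdsWithin 0 (Set.Ioo 0 τ)) (nhds 0))
    (p : ℝ → EuclideanSpace ℝ (Fin n) → ℝ)
    (hp : ∀ t x, p t x = ∫ x₀, gaussPdf n (σ t) x₀ x * p0 x₀)
    -- `p_t ∈ C²` on the ball; `g t x = ∇ log p_t(x)`, `Hess t x = ∇² log p_t(x)`
    (hC2 : ∀ t ∈ Set.Ioo (0 : ℝ) τ,
      ContDiffOn ℝ 2 (fun x => Real.log (p t x)) (Metric.closedBall 0 d))
    (g : ℝ → EuclideanSpace ℝ (Fin n) → EuclideanSpace ℝ (Fin n))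
    (hg : ∀ t ∈ Set.Ioo (0 : ℝ) τ, ∀ x ∈ Metric.closedBall (0 : EuclideanSpace ℝ (Fin n)) d,
      HasGradientAt (fun z => Real.log (p t z)) (g t x) x)
    (Hess : ℝ → EuclideanSpace ℝ (Fin n) → Matrix (Fin n) (Fin n) ℝ)
    (hHess : ∀ t ∈ Set.Ioo (0 : ℝ) τ, ∀ x ∈ Metric.closedBall (0 : EuclideanSpace ℝ (Fin n)) d,
      ∀ i j, Hess t x i j = fderiv ℝ (g t) x (EuclideanSpace.single j 1) i)
    -- (i) pointwise convergence of `log p_t` to `log p₀` on the ball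
    (hlim : ∀ x ∈ Metric.closedBall (0 : EuclideanSpace ℝ (Fin n)) d,
      Tendsto (fun t => Real.log (p t x)) (nhdsWithin 0 (Set.Ioo 0 τ))
        (nhds (Real.log (p0 x))))
    -- (ii) uniform (in `t < τ`) bounds on score and Hessian over the ball
    (hbdd : ∃ K, ∀ t ∈ Set.Ioo (0 : ℝ) τ,
      ∀ x ∈ Metric.closedBall (0 : EuclideanSpace ℝ (Fin n)) d,
        ‖g t x‖ ≤ K ∧ ∀ i j, |Hess t x i j| ≤ K)
    (H : Matrix (Fin m) (Fin n) ℝ) (y : Fin m → ℝ) (σy : ℝ) (hσy : 0 < σy)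
    (py : ℝ)
    (hpy : py = ∫ x₀, gpdf m σy (∑ i, (y i - H.mulVec (fun k => x₀ k) i) ^ 2) * p0 x₀)
    (hpy_pos : 0 < py) :
    ∀ x ∈ Metric.closedBall (0 : EuclideanSpace ℝ (Fin n)) d,
      Tendsto
        (fun t =>
          (-Real.log (p t x) - σ t ^ 2 / 2 * ‖g t x‖ ^ 2
              - σ t ^ 2 / 2 * (Hess t x).trace
              + (∑ i, (y i - H.mulVec (fun k => (x + σ t ^ 2 • g t x) k) i) ^ 2)
                  / (2 * σy ^ 2)
              + σ t ^ 4 / (2 * σy ^ 2) * (H * Hess t x * Hᵀ).trace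
              + σ t ^ 2 / (2 * σy ^ 2) * (H * Hᵀ).trace
              + Real.log py - n * Real.log (σ t)
              + (-(n : ℝ) / 2 + m * Real.log σy
                  - ((n : ℝ) - m) / 2 * Real.log (2 * Real.pi)))
            + n * Real.log (σ t))
        (nhdsWithin 0 (Set.Ioo 0 τ))
        (nhds
          (-(Real.log (p0 x)
              + Real.log (gpdf m σy (∑ i, (y i - H.mulVec (fun k => x k) i) ^ 2))
              - Real.log py)
            + (-(n : ℝ) / 2 - (n : ℝ) / 2 * Real.log (2 * Real.pi)))) :=
  vml_pointwise_limit_general n m τ d p0 σ hσ0 p g Hess hlim hbdd H y σy hσy py
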